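/- Let B_1, ..., B_K be subspaces of ℝ^n with dim(B_i) = m_i, and suppose Σ m_i = |X| for some X ⊆ [n], with dim(S_{X^c} ∩ B_i) = 0 for all i. Then the following are equivalent: (a) for every partition (I_1, ..., I_K) of X with |I_i| = m_i, Σ_{i=1}^K dim(S_{I_i^c} ∩ B_i) > 0; (b) there exists J ⊆ X with Σ_{i=1}^K dim(S_{J ∪ X^c} ∩ B_i) > |J|. -/

import Mathlib

/-!
For a subspace `B ⊆ ℝⁿ`, `A ↦ dim B - dim (S_{Aᶜ} ∩ B)` is the rank function of the linear
matroid on `[n]` given by the coordinate projections of `B`. So (a) fails iff `X` can be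
partitioned into sets `I_i` independent in the `i`-th matroid (the sizes `|I_i| = m_i` are then
forced by `Σ m_i = |X|`). By Rado's theorem this happens iff `|A| ≤ Σ_i r_i(A)` for all `A ⊆ X`,
which for `J = X \ A` is the negation of (b).

Rado's theorem is proved by induction on `X`: some matroid `i₀` can be contracted at `x ∈ X`
keeping Rado's condition on `X \ {x}`. Otherwise every matroid spans `x` from a tight set
(`Σ_i r_i(C) ≤ |C|`). Tight subsets of `X` are closed under union by submodularity and Rado's
condition on their intersection, so the union of these sets is a tight set spanning `x` in every
matroid, which violates Rado's condition.
-/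

open Finset MeasureTheory

/-- The sparse subspace `S_J ⊆ ℝ^n`: vectors vanishing outside `J`. -/
def sparseSubspace (n : ℕ) (J : Finset (Fin n)) : Submodule ℝ (Fin n → ℝ) where
  carrier := {v | ∀ i, i ∉ J → v i = 0}
  add_mem' := by intro a b ha hb i hi; simp [ha i hi, hb i hi]
  zero_mem' := by intro i _; rfl
  smul_mem' := by intro c v hv i hi; simp [hv i hi]

open Function

theorem Submodule.finrank_le_finrank_ker_inf_add_one {K M : Type*} [Field K] [AddCommGroup M]
    [Module K M] (U : Submodule K M) [FiniteDimensional K U] (f : M →ₗ[K] K) :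
    Module.finrank K U ≤ Module.finrank K ↥(LinearMap.ker f ⊓ U) + 1 := by
  have hker : (LinearMap.ker (f ∘ₗ U.subtype)).map U.subtype = LinearMap.ker f ⊓ U := by
    rw [LinearMap.ker_comp, Submodule.map_comap_subtype, inf_comm]
  have hrange : Module.finrank K (LinearMap.range (f ∘ₗ U.subtype)) ≤ 1 := by
    simpa using (LinearMap.range (f ∘ₗ U.subtype)).finrank_le
  rw [← hker, Submodule.finrank_map_subtype_eq,
    ← LinearMap.finrank_range_add_finrank_ker (f ∘ₗ U.subtype)]
  omega

theorem Finset.biUnion_update_insert {α ι : Type*} [DecidableEq α] [Fintype ι] [DecidableEq ι]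
    (I : ι → Finset α) (i₀ : ι) (x : α) :
    univ.biUnion (update I i₀ (insert x (I i₀))) = insert x (univ.biUnion I) := by
  ext a
  simp only [mem_biUnion, mem_univ, true_and, mem_insert, update_apply]
  constructor
  · rintro ⟨j, hj⟩
    split_ifs at hj with h
    · subst h
      exact (mem_insert.1 hj).imp_right fun h => ⟨j, h⟩
    · exact .inr ⟨j, hj⟩
  · rintro (rfl | ⟨j, hj⟩)
    · exact ⟨i₀, by simp⟩
    · refine ⟨j, ?_⟩
      split_ifs with h
      · subst h
        exact mem_insert_of_mem hj
      · exact hj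

theorem Pairwise.disjoint_update_insert {α ι : Type*} [DecidableEq α] [DecidableEq ι]
    {I : ι → Finset α} (hI : Pairwise (Disjoint on I)) (i₀ : ι) {x : α} (hx : ∀ i, x ∉ I i) :
    Pairwise (Disjoint on update I i₀ (insert x (I i₀))) := by
  intro i j hij
  simp only [onFun, update_apply]
  split_ifs with hi hj hj
  · exact absurd (hi.trans hj.symm) hij
  · subst hi
    exact disjoint_insert_left.2 ⟨hx j, hI hij⟩
  · subst hj
    exact disjoint_insert_right.2 ⟨hx i, hI hij⟩
  · exact hI hij

theorem Finset.sum_update_apply_add {α ι : Type*} [Fintype ι] [DecidableEq ι]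
    (r : ι → Finset α → ℕ) (i₀ : ι) (g : Finset α → ℕ) (A : Finset α) :
    ∑ j, update r i₀ g j A + r i₀ A = g A + ∑ j, r j A := by
  rw [← sum_erase_add _ _ (mem_univ i₀), ← sum_erase_add _ _ (mem_univ i₀), update_self,
    sum_congr rfl fun j hj => by rw [update_of_ne (ne_of_mem_erase hj)]]
  ring

structure IsRankFn {α : Type*} [DecidableEq α] (r : Finset α → ℕ) : Prop where
  empty : r ∅ = 0
  insert_le : ∀ x A, r (insert x A) ≤ r A + 1
  mono : Monotone r
  union_add_inter_le : ∀ A B, r (A ∪ B) + r (A ∩ B) ≤ r A + r B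

namespace IsRankFn

variable {α : Type*} [DecidableEq α] {r : Finset α → ℕ}

theorem singleton_le (hr : IsRankFn r) (x : α) : r {x} ≤ 1 := by
  simpa [hr.empty] using hr.insert_le x ∅

theorem union_le_add_card (hr : IsRankFn r) (A D : Finset α) : r (A ∪ D) ≤ r A + #D := by
  induction D using Finset.induction_on with
  | empty => simp
  | insert y D hy ih =>
    rw [union_insert, card_insert_of_notMem hy]
    linarith [hr.insert_le y (A ∪ D)]

theorem insert_eq_of_subset (hr : IsRankFn r) {x : α} {C U : Finset α}
    (hC : r (insert x C) = r C) (hCU : C ⊆ U) : r (insert x U) = r U := by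
  have h := hr.union_add_inter_le (insert x C) U
  rw [insert_union, union_eq_right.2 hCU] at h
  have : r C ≤ r (insert x C ∩ U) := hr.mono (subset_inter (subset_insert x C) hCU)
  have : r U ≤ r (insert x U) := hr.mono (subset_insert x U)
  omega

theorem contract (hr : IsRankFn r) (x : α) : IsRankFn fun A => r (insert x A) - r {x} where
  empty := by simp
  insert_le y A := by
    rw [insert_comm]
    have := hr.mono (singleton_subset_iff.2 (mem_insert_self x A))
    have := hr.insert_le y (insert x A)
    omega
  mono A B h := Nat.sub_le_sub_right (hr.mono (insert_subset_insert x h)) _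
  union_add_inter_le A B := by
    have h := hr.union_add_inter_le (insert x A) (insert x B)
    rw [← insert_union_distrib, ← insert_inter_distrib] at h
    have hx : ∀ C, r {x} ≤ r (insert x C) := fun C =>
      hr.mono (singleton_subset_iff.2 (mem_insert_self x C))
    have := hx (A ∩ B)
    have := hx (A ∪ B)
    have := hx A
    have := hx B
    omega

end IsRankFn

section Rado

variable {α ι : Type*} [Fintype ι] {r : ι → Finset α → ℕ}

variable (r) in
def RadoCondition (X : Finset α) : Prop :=
  ∀ A ⊆ X, #A ≤ ∑ i, r i A

theorem RadoCondition.mono {X Y : Finset α} (h : RadoCondition r Y) (hXY : X ⊆ Y) :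
    RadoCondition r X :=
  fun A hA => h A (hA.trans hXY)

variable [DecidableEq α]

theorem sum_rank_union_le_card (hr : ∀ i, IsRankFn (r i)) {A B : Finset α}
    (hAB : #(A ∩ B) ≤ ∑ i, r i (A ∩ B)) (hA : ∑ i, r i A ≤ #A) (hB : ∑ i, r i B ≤ #B) :
    ∑ i, r i (A ∪ B) ≤ #(A ∪ B) := by
  have h : ∑ i, (r i (A ∪ B) + r i (A ∩ B)) ≤ ∑ i, (r i A + r i B) :=
    sum_le_sum fun i _ => (hr i).union_add_inter_le A B
  rw [sum_add_distrib, sum_add_distrib] at h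
  have := card_union_add_card_inter A B
  omega

theorem RadoCondition.sum_rank_biUnion_le_card {κ : Type*} {X : Finset α}
    (hr : ∀ i, IsRankFn (r i)) (h : RadoCondition r X) {C : κ → Finset α} (s : Finset κ)
    (hCX : ∀ k ∈ s, C k ⊆ X) (hC : ∀ k ∈ s, ∑ i, r i (C k) ≤ #(C k)) :
    ∑ i, r i (s.biUnion C) ≤ #(s.biUnion C) := by
  classical
  induction s using Finset.induction_on with
  | empty => simp [(hr _).empty]
  | insert k s hk ih =>
    rw [biUnion_insert]
    refine sum_rank_union_le_card hr (h _ ?_) (hC k (mem_insert_self k s))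
      (ih (fun k hk => hCX k (mem_insert_of_mem hk)) fun k hk => hC k (mem_insert_of_mem hk))
    exact inter_subset_left.trans (hCX k (mem_insert_self k s))

variable [DecidableEq ι]

theorem RadoCondition.exists_tight_of_not_contract (hr : ∀ i, IsRankFn (r i)) {x : α} {X : Finset α}
    (h : RadoCondition r (insert x X)) (i : ι)
    (hi : r i {x} = 1 → ¬RadoCondition (update r i fun A => r i (insert x A) - r i {x}) X) :
    ∃ C ⊆ X, ∑ j, r j C ≤ #C ∧ r i (insert x C) = r i C := by
  by_cases hx1 : r i {x} = 1
  · obtain ⟨A, hAX, hA⟩ : ∃ A ⊆ X, _ < #A := by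
      simpa [RadoCondition] using hi hx1
    have hsum := sum_update_apply_add r i (fun A => r i (insert x A) - r i {x}) A
    have hall := h A (hAX.trans (subset_insert x X))
    have := (hr i).mono (subset_insert x A)
    have := (hr i).mono (singleton_subset_iff.2 (mem_insert_self x A))
    exact ⟨A, hAX, by omega, by omega⟩
  · have hx0 : r i {x} = 0 := by
      have := (hr i).singleton_le x
      omega
    exact ⟨∅, empty_subset X, by simp [(hr _).empty], by simp [hx0, (hr i).empty]⟩

theorem RadoCondition.exists_contract (hr : ∀ i, IsRankFn (r i)) {x : α} {X : Finset α}
    (h : RadoCondition r (insert x X)) (hx : x ∉ X) :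
    ∃ i₀, r i₀ {x} = 1 ∧
      RadoCondition (update r i₀ fun A => r i₀ (insert x A) - r i₀ {x}) X := by
  by_contra! hne
  choose C hCX hC hxC using fun i => h.exists_tight_of_not_contract hr i (hne i)
  set U := univ.biUnion C
  have hUX : U ⊆ X := biUnion_subset.2 fun i _ => hCX i
  have hU : ∑ j, r j U ≤ #U :=
    (h.mono (subset_insert x X)).sum_rank_biUnion_le_card hr univ (fun i _ => hCX i)
      fun i _ => hC i
  have hxU : ∀ j, r j (insert x U) = r j U := fun j =>
    (hr j).insert_eq_of_subset (hxC j) (subset_biUnion_of_mem C (mem_univ j))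
  have := h (insert x U) (insert_subset_insert x hUX)
  rw [card_insert_of_notMem fun hxU => hx (hUX hxU), sum_congr rfl fun j _ => hxU j] at this
  omega

theorem RadoCondition.exists_partition (hr : ∀ i, IsRankFn (r i)) {X : Finset α}
    (h : RadoCondition r X) :
    ∃ I : ι → Finset α, Pairwise (Disjoint on I) ∧ univ.biUnion I = X ∧
      ∀ i, r i (I i) = #(I i) := by
  induction X using Finset.induction_on generalizing r with
  | empty =>
    exact ⟨fun _ => ∅, fun _ _ _ => disjoint_empty_left _, by ext; simp, fun i => (hr i).empty⟩
  | insert x X hx ih =>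
    obtain ⟨i₀, hx1, hcontr⟩ := h.exists_contract hr hx
    have hr' : ∀ i, IsRankFn (update r i₀ (fun A => r i₀ (insert x A) - r i₀ {x}) i) := by
      intro i
      rcases eq_or_ne i i₀ with rfl | hi
      · simpa using (hr i).contract x
      · simpa [update_of_ne hi] using hr i
    obtain ⟨I, hdisj, hcover, hI⟩ := ih hr' hcontr
    have hxI : ∀ i, x ∉ I i := fun i hxi => hx (hcover ▸ mem_biUnion.2 ⟨i, mem_univ i, hxi⟩)
    refine ⟨update I i₀ (insert x (I i₀)), hdisj.disjoint_update_insert i₀ hxI,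
      by rw [biUnion_update_insert, hcover], fun i => ?_⟩
    rcases eq_or_ne i i₀ with rfl | hi
    · have hIi := hI i
      have := (hr i).mono (singleton_subset_iff.2 (mem_insert_self x (I i)))
      simp only [update_self] at hIi ⊢
      rw [card_insert_of_notMem (hxI i)]
      omega
    · simpa [update_of_ne hi] using hI i

end Rado

namespace sparseSubspace

variable {n : ℕ}

theorem mem_iff {J : Finset (Fin n)} {v : Fin n → ℝ} :
    v ∈ sparseSubspace n J ↔ ∀ i, i ∉ J → v i = 0 := Iff.rfl

theorem mono {J J' : Finset (Fin n)} (h : J ⊆ J') : sparseSubspace n J ≤ sparseSubspace n J' :=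
  fun _ hv i hi => hv i fun hiJ => hi (h hiJ)

theorem univ_eq_top : sparseSubspace n univ = ⊤ := by
  ext v
  simp [mem_iff]

theorem inf_eq (J J' : Finset (Fin n)) :
    sparseSubspace n J ⊓ sparseSubspace n J' = sparseSubspace n (J ∩ J') := by
  ext v
  simp only [Submodule.mem_inf, mem_iff, mem_inter, not_and_or]
  exact ⟨fun h i hi => hi.elim (h.1 i) (h.2 i),
    fun h => ⟨fun i hi => h i (.inl hi), fun i hi => h i (.inr hi)⟩⟩

theorem compl_insert_eq (x : Fin n) (A : Finset (Fin n)) :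
    sparseSubspace n (insert x A)ᶜ =
      LinearMap.ker (LinearMap.proj (R := ℝ) (φ := fun _ : Fin n => ℝ) x) ⊓
        sparseSubspace n Aᶜ := by
  ext v
  simp only [Submodule.mem_inf, mem_iff, mem_compl, not_not, LinearMap.mem_ker,
    LinearMap.proj_apply, mem_insert, forall_eq_or_imp]

end sparseSubspace

section CoordRank

variable {n : ℕ}

/-- `S_{Aᶜ} ⊓ B` is the kernel of the projection of `B` onto the coordinates in `A`, so this is
the rank of that projection. -/
noncomputable def coordRank (B : Submodule ℝ (Fin n → ℝ)) (A : Finset (Fin n)) : ℕ :=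
  Module.finrank ℝ B - Module.finrank ℝ ↥(sparseSubspace n Aᶜ ⊓ B)

theorem coordRank_add_finrank_inf (B : Submodule ℝ (Fin n → ℝ)) (A : Finset (Fin n)) :
    coordRank B A + Module.finrank ℝ ↥(sparseSubspace n Aᶜ ⊓ B) = Module.finrank ℝ B :=
  Nat.sub_add_cancel (Submodule.finrank_mono inf_le_right)

theorem finrank_sparseSubspace_inf_antitone (B : Submodule ℝ (Fin n → ℝ)) {A A' : Finset (Fin n)}
    (h : A ⊆ A') :
    Module.finrank ℝ ↥(sparseSubspace n A'ᶜ ⊓ B) ≤ Module.finrank ℝ ↥(sparseSubspace n Aᶜ ⊓ B) :=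
  Submodule.finrank_mono (inf_le_inf_right _ (sparseSubspace.mono (compl_subset_compl.2 h)))

theorem isRankFn_coordRank (B : Submodule ℝ (Fin n → ℝ)) : IsRankFn (coordRank B) where
  empty := by rw [coordRank, compl_empty, sparseSubspace.univ_eq_top, top_inf_eq, Nat.sub_self]
  insert_le x A := by
    have := (sparseSubspace n Aᶜ ⊓ B).finrank_le_finrank_ker_inf_add_one (LinearMap.proj x)
    rw [← inf_assoc, ← sparseSubspace.compl_insert_eq] at this
    unfold coordRank
    omega
  mono A A' h := by
    have := finrank_sparseSubspace_inf_antitone B h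
    unfold coordRank
    omega
  union_add_inter_le A A' := by
    have hsup := Submodule.finrank_sup_add_finrank_inf_eq (sparseSubspace n Aᶜ ⊓ B)
      (sparseSubspace n A'ᶜ ⊓ B)
    have hinf : (sparseSubspace n Aᶜ ⊓ B) ⊓ (sparseSubspace n A'ᶜ ⊓ B) =
        sparseSubspace n (A ∪ A')ᶜ ⊓ B := by
      rw [inf_inf_inf_comm, inf_idem, sparseSubspace.inf_eq, compl_union]
    have hle : Module.finrank ℝ ↥((sparseSubspace n Aᶜ ⊓ B) ⊔ (sparseSubspace n A'ᶜ ⊓ B)) ≤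
        Module.finrank ℝ ↥(sparseSubspace n (A ∩ A')ᶜ ⊓ B) :=
      Submodule.finrank_mono (sup_le
        (inf_le_inf_right _ (sparseSubspace.mono (compl_subset_compl.2 inter_subset_left)))
        (inf_le_inf_right _ (sparseSubspace.mono (compl_subset_compl.2 inter_subset_right))))
    rw [hinf] at hsup
    have := coordRank_add_finrank_inf B A
    have := coordRank_add_finrank_inf B A'
    have := coordRank_add_finrank_inf B (A ∪ A')
    have := coordRank_add_finrank_inf B (A ∩ A')
    omega

end CoordRank

theorem Finset.sdiff_union_compl_eq_compl {α : Type*} [Fintype α] [DecidableEq α]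
    {A X : Finset α} (h : A ⊆ X) : X \ A ∪ Xᶜ = Aᶜ := by
  ext a
  have := @h a
  simp only [mem_union, mem_sdiff, mem_compl]
  tauto

section Partition

variable {n : ℕ} {ι : Type*} [Fintype ι] (B : ι → Submodule ℝ (Fin n → ℝ)) {X : Finset (Fin n)}

theorem radoCondition_coordRank (hsum : ∑ i, Module.finrank ℝ (B i) = #X)
    (h : ∀ J ⊆ X, ∑ i, Module.finrank ℝ ↥(sparseSubspace n (J ∪ Xᶜ) ⊓ B i) ≤ #J) :
    RadoCondition (fun i => coordRank (B i)) X := by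
  intro A hA
  show #A ≤ ∑ i, coordRank (B i) A
  have hJ := h (X \ A) sdiff_subset
  rw [sdiff_union_compl_eq_compl hA, card_sdiff_of_subset hA] at hJ
  have hsplit : ∑ i, (coordRank (B i) A + Module.finrank ℝ ↥(sparseSubspace n Aᶜ ⊓ B i)) =
      #X := by
    simp only [coordRank_add_finrank_inf, hsum]
  rw [sum_add_distrib] at hsplit
  have := card_le_card hA
  omega

theorem card_eq_finrank_of_partition (hsum : ∑ i, Module.finrank ℝ (B i) = #X)
    {I : ι → Finset (Fin n)} (hdisj : Pairwise (Disjoint on I)) (hcover : univ.biUnion I = X)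
    (hI : ∀ i, coordRank (B i) (I i) = #(I i)) (i : ι) : #(I i) = Module.finrank ℝ (B i) := by
  have hle : ∀ i ∈ univ, #(I i) ≤ Module.finrank ℝ (B i) := fun i _ => by
    rw [← hI i, ← coordRank_add_finrank_inf (B i) (I i)]
    exact Nat.le_add_right _ _
  refine (sum_eq_sum_iff_of_le hle).1 ?_ i (mem_univ i)
  rw [hsum, ← hcover, card_biUnion fun i _ j _ hij => hdisj hij]

theorem sum_finrank_inf_le_card_of_partition {I : ι → Finset (Fin n)}
    (hdisj : Pairwise (Disjoint on I)) (hcover : univ.biUnion I = X)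
    (hI : ∀ i, Module.finrank ℝ ↥(sparseSubspace n (I i)ᶜ ⊓ B i) = 0) {J : Finset (Fin n)}
    (hJX : J ⊆ X) : ∑ i, Module.finrank ℝ ↥(sparseSubspace n (J ∪ Xᶜ) ⊓ B i) ≤ #J := by
  have hJ : J ∪ Xᶜ = (X \ J)ᶜ := by
    rw [← sdiff_union_compl_eq_compl sdiff_subset, Finset.sdiff_sdiff_eq_self hJX]
  have hcard : ∑ i, #(I i ∩ J) = #J := by
    rw [← card_biUnion fun i _ j _ hij => (hdisj hij).mono inter_subset_left inter_subset_left,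
      ← biUnion_inter, hcover, inter_eq_right.2 hJX]
  have hle : ∀ i, Module.finrank ℝ ↥(sparseSubspace n (X \ J)ᶜ ⊓ B i) ≤ #(I i ∩ J) := by
    intro i
    have hsub := finrank_sparseSubspace_inf_antitone (B i) (sdiff_subset_sdiff (hcover ▸
      subset_biUnion_of_mem I (mem_univ i)) (subset_refl J))
    have hunion := (isRankFn_coordRank (B i)).union_le_add_card (I i \ J) (I i ∩ J)
    rw [sdiff_union_inter] at hunion
    have := coordRank_add_finrank_inf (B i) (I i)
    have := coordRank_add_finrank_inf (B i) (I i \ J)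
    have := hI i
    omega
  rw [hJ, ← hcard]
  exact sum_le_sum fun i _ => hle i

end Partition

theorem stmt10_general {n K : ℕ} (B : Fin K → Submodule ℝ (Fin n → ℝ)) (m : Fin K → ℕ)
    (hdim : ∀ i, Module.finrank ℝ ↥(B i) = m i) (X : Finset (Fin n))
    (hsum : ∑ i, m i = X.card) :
    (∀ I : Fin K → Finset (Fin n), (∀ i, I i ⊆ X) →
        (∀ i j, i ≠ j → Disjoint (I i) (I j)) → Finset.univ.biUnion I = X →
        (∀ i, (I i).card = m i) →
        0 < ∑ i, Module.finrank ℝ ↥(sparseSubspace n (I i)ᶜ ⊓ B i)) ↔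
      ∃ J ⊆ X, J.card < ∑ i, Module.finrank ℝ ↥(sparseSubspace n (J ∪ Xᶜ) ⊓ B i) := by
  obtain rfl : m = fun i => Module.finrank ℝ (B i) := funext fun i => (hdim i).symm
  constructor
  · intro ha
    by_contra! hb
    obtain ⟨I, hdisj, hcover, hI⟩ :=
      (radoCondition_coordRank B hsum hb).exists_partition fun i => isRankFn_coordRank (B i)
    have hcard := card_eq_finrank_of_partition B hsum hdisj hcover hI
    have hzero : ∀ i, Module.finrank ℝ ↥(sparseSubspace n (I i)ᶜ ⊓ B i) = 0 := fun i => by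
      have := coordRank_add_finrank_inf (B i) (I i)
      rw [hI, hcard] at this
      omega
    exact (ha I (fun i => hcover ▸ subset_biUnion_of_mem I (mem_univ i))
      (fun i j hij => hdisj hij) hcover hcard).ne' (sum_eq_zero fun i _ => hzero i)
  · rintro ⟨J, hJX, hJ⟩ I - hdisj hcover -
    by_contra! h0
    have hzero : ∀ i, Module.finrank ℝ ↥(sparseSubspace n (I i)ᶜ ⊓ B i) = 0 := fun i =>
      sum_eq_zero_iff.1 (Nat.le_zero.1 h0) i (mem_univ i)
    exact hJ.not_ge (sum_finrank_inf_le_card_of_partition B (fun i j hij => hdisj i j hij)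
      hcover hzero hJX)

theorem stmt10 {n K : ℕ} (B : Fin K → Submodule ℝ (Fin n → ℝ)) (m : Fin K → ℕ)
    (hdim : ∀ i, Module.finrank ℝ ↥(B i) = m i) (X : Finset (Fin n))
    (hsum : ∑ i, m i = X.card)
    (htriv : ∀ i, Module.finrank ℝ ↥(sparseSubspace n Xᶜ ⊓ B i) = 0) :
    (∀ I : Fin K → Finset (Fin n), (∀ i, I i ⊆ X) →
        (∀ i j, i ≠ j → Disjoint (I i) (I j)) → Finset.univ.biUnion I = X →
        (∀ i, (I i).card = m i) →
        0 < ∑ i, Module.finrank ℝ ↥(sparseSubspace n (I i)ᶜ ⊓ B i)) ↔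
      ∃ J ⊆ X, J.card < ∑ i, Module.finrank ℝ ↥(sparseSubspace n (J ∪ Xᶜ) ⊓ B i) :=
  stmt10_general B m hdim X hsum
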